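/- arXiv:2001.09014 — 2 statements merged into one kernel-verified Lean document; each statement's English description precedes it below -/
import Mathlib

section
/- Let μ be an integer-valued random measure with compensator ν such that J = K up to evanescence, let X = X^i + X^p with X^i quasi-left-continuous càdlàg and {ΔX^i ≠ 0} ⊂ D, X^p predictable càdlàg with {ΔX^p ≠ 0} ⊂ J, and let φ ≥ 0 be a predictable random field with φ(·,s,0) = 0 and φ = φ 1_K, with |φ| ⋆ μ^X ∈ A⁺. Then ∫_{]0,·]×ℝ} φ(s, x) μ^X(ds dx) = ∑_{0<s≤·} φ(s, ΔX^p_s), i.e., the jumps of X^i do not contribute on K. -/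
open MeasureTheory Filter Set Function
open scoped ENNReal

noncomputable section

variable {Ω : Type*}

/-- A real function is càdlàg: right-continuous with finite left limits. -/
def IsCadlag (f : ℝ → ℝ) : Prop :=
  (∀ t : ℝ, ContinuousWithinAt f (Ici t) t) ∧
  (∀ t : ℝ, ∃ l : ℝ, Tendsto f (nhdsWithin t (Iio t)) (nhds l))

/-- Jump of a process at time `t`: `ΔX_t = X_t - X_{t-}`. -/
def jumpOf (X : ℝ → Ω → ℝ) (t : ℝ) (ω : Ω) : ℝ :=
  X t ω - Function.leftLim (fun s => X s ω) t

/-- Sum over the jump times of `X` in `(0,t]` of `g(s, X_{s-}, ΔX_s)`, i.e. the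
integral of `g` against the jump measure `μ^X`, as an `ℝ≥0∞`-valued process. -/
def jumpSum (X : ℝ → Ω → ℝ) (g : ℝ → ℝ → ℝ → ℝ) (t : ℝ) (ω : Ω) : ℝ≥0∞ :=
  ∑' s : {s : ℝ // s ∈ Ioc (0:ℝ) t ∧ jumpOf X s ω ≠ 0},
    ENNReal.ofReal (g (s : ℝ) (Function.leftLim (fun u => X u ω) (s : ℝ)) (jumpOf X (s : ℝ) ω))

/-- Local martingale: there is a localizing sequence of stopping times. -/
def IsLocalMartingale {m : MeasurableSpace Ω} (F : Filtration ℝ m) (P : Measure Ω)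
    (M : ℝ → Ω → ℝ) : Prop :=
  ∃ τ : ℕ → Ω → ℝ,
    (∀ n, IsStoppingTime F (fun ω => (τ n ω : WithTop ℝ))) ∧
    (∀ ω, Tendsto (fun n => τ n ω) atTop atTop) ∧
    (∀ n, Martingale (fun t ω => M (min t (τ n ω)) ω) F P)

/-- Generators of the predictable σ-field: `{0} × A₀` and `(s,t] × A_s`. -/
def predictableRectangles {m : MeasurableSpace Ω} (F : Filtration ℝ m) : Set (Set (ℝ × Ω)) :=
  {S | ∃ s t : ℝ, ∃ A : Set Ω, MeasurableSet[F s] A ∧ S = Ioc s t ×ˢ A} ∪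
  {S | ∃ A : Set Ω, MeasurableSet[F 0] A ∧ S = {(0:ℝ)} ×ˢ A}

/-- The predictable σ-field on `ℝ × Ω`. -/
def predictableSigma {m : MeasurableSpace Ω} (F : Filtration ℝ m) : MeasurableSpace (ℝ × Ω) :=
  MeasurableSpace.generateFrom (predictableRectangles F)

/-- A predictable process. -/
def PredictableProcess {m : MeasurableSpace Ω} (F : Filtration ℝ m) (M : ℝ → Ω → ℝ) : Prop :=
  @Measurable (ℝ × Ω) ℝ (predictableSigma F) _ (fun p => M p.1 p.2)

/-- A predictable random set. -/
def PredictableSet {m : MeasurableSpace Ω} (F : Filtration ℝ m) (S : Set (ℝ × Ω)) : Prop :=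
  MeasurableSet[predictableSigma F] S

/-- A predictable random field `W_s(e)(ω)`, measurable for the σ-field `𝒫 ⊗ B(ℝ)`. -/
def PredictableField {m : MeasurableSpace Ω} (F : Filtration ℝ m)
    (W : ℝ → ℝ → Ω → ℝ) : Prop :=
  @Measurable ((ℝ × Ω) × ℝ) ℝ ((predictableSigma F).prod (inferInstance : MeasurableSpace ℝ)) _
    (fun p => W p.1.1 p.2 p.1.2)

/-- A predictable time: a stopping time admitting an announcing sequence. -/
def IsPredictableTime {m : MeasurableSpace Ω} (F : Filtration ℝ m) (S : Ω → ℝ) : Prop :=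
  IsStoppingTime F (fun ω => (S ω : WithTop ℝ)) ∧
  ∃ τ : ℕ → Ω → ℝ,
    (∀ n, IsStoppingTime F (fun ω => (τ n ω : WithTop ℝ))) ∧
    (∀ n ω, τ n ω ≤ τ (n + 1) ω) ∧
    (∀ ω, Tendsto (fun n => τ n ω) atTop (nhds (S ω))) ∧
    (∀ n ω, 0 < S ω → τ n ω < S ω)

/-- Graph `[[T]]` of a random time (active when `0 < t`). -/
def graphOf (T : Ω → ℝ) : Set (ℝ × Ω) := {p | 0 < p.1 ∧ T p.2 = p.1}

/-- Totally inaccessible time: its graph meets the graph of no predictable time,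
up to a null set. -/
def TotallyInaccessible {m : MeasurableSpace Ω} (F : Filtration ℝ m) (P : Measure Ω)
    (T : Ω → ℝ) : Prop :=
  ∀ S : Ω → ℝ, IsPredictableTime F S → ∀ᵐ ω ∂P, ¬(0 < T ω ∧ T ω = S ω)

/-- An evanescent random set. -/
def Evanescent {m : MeasurableSpace Ω} (P : Measure Ω) (A : Set (ℝ × Ω)) : Prop :=
  ∀ᵐ ω ∂P, ∀ t : ℝ, (t, ω) ∉ A

/-- The class `𝒜⁺_loc` of increasing processes of locally integrable variation. -/
def InAplusLoc {m : MeasurableSpace Ω} (F : Filtration ℝ m) (P : Measure Ω)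
    (A : ℝ → Ω → ℝ≥0∞) : Prop :=
  ∃ τ : ℕ → Ω → ℝ,
    (∀ n, IsStoppingTime F (fun ω => (τ n ω : WithTop ℝ))) ∧
    (∀ ω, Tendsto (fun n => τ n ω) atTop atTop) ∧
    (∀ n, ∫⁻ ω, A (τ n ω) ω ∂P ≠ ⊤)

/-- Purely discontinuous local martingale / orthogonal process: `[M,N] = 0` for every
continuous local martingale `N`, equivalently `M·N` is a local martingale for every
continuous local martingale `N`. -/
def PurelyDiscontinuous {m : MeasurableSpace Ω} (F : Filtration ℝ m) (P : Measure Ω)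
    (M : ℝ → Ω → ℝ) : Prop :=
  ∀ N : ℝ → Ω → ℝ, IsLocalMartingale F P N → (∀ ω, Continuous fun t => N t ω) →
    IsLocalMartingale F P (fun t ω => M t ω * N t ω)

/-- `v` is of class `C^{0,1}` with spatial derivative `vx`. -/
def IsC01 (v vx : ℝ → ℝ → ℝ) : Prop :=
  Continuous (Function.uncurry v) ∧ Continuous (Function.uncurry vx) ∧
  ∀ s x : ℝ, HasDerivAt (fun y => v s y) (vx s x) x

/-- Total mass of the atom of the random measure `ν` at time `t`: `ν̂_t(ℝ)`. -/
def hatNu (ν : Ω → Measure (ℝ × ℝ)) (t : ℝ) (ω : Ω) : ℝ≥0∞ :=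
  ν ω ({t} ×ˢ (univ : Set ℝ))

/-- The atom measure `ν̂_t(de) = ν({t}, de)`. -/
def hatNuMeasure (ν : Ω → Measure (ℝ × ℝ)) (t : ℝ) (ω : Ω) : Measure ℝ :=
  Measure.map Prod.snd ((ν ω).restrict ({t} ×ˢ (univ : Set ℝ)))

/-- `Ŵ_t = ∫ W_t(e) ν̂_t(de)`. -/
def hatW (ν : Ω → Measure (ℝ × ℝ)) (W : ℝ → ℝ → Ω → ℝ) (t : ℝ) (ω : Ω) : ℝ :=
  ∫ e, W t e ω ∂(hatNuMeasure ν t ω)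

/-- The predictable bracket process
`C(W)_{T'} = |W - Ŵ 1_J|² ⋆ ν_{T'} + ∑_{s ≤ T'} (1 - ν̂_s(ℝ)) |Ŵ_s|² 1_{J \ K}(s)`,
where `J = {ν̂ > 0}` and `K = {ν̂ = 1}`. -/
def CW (ν : Ω → Measure (ℝ × ℝ)) (W : ℝ → ℝ → Ω → ℝ) (T' : ℝ) (ω : Ω) : ℝ≥0∞ :=
  (∫⁻ p in Ioc (0:ℝ) T' ×ˢ (univ : Set ℝ),
      ENNReal.ofReal ((W p.1 p.2 ω -
        (if 0 < hatNu ν p.1 ω then hatW ν W p.1 ω else 0)) ^ 2) ∂(ν ω)) +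
  ∑' s : {s : ℝ // s ∈ Ioc (0:ℝ) T' ∧ 0 < hatNu ν s ω ∧ hatNu ν s ω ≠ 1},
    (1 - hatNu ν (s : ℝ) ω) * ENNReal.ofReal ((hatW ν W (s : ℝ) ω) ^ 2)

/-- `‖W‖²_{L²(μ)} = E ∫_{(0,T']×ℝ} |W_s(e)|² ν(ds de)`. -/
def L2normSq {m : MeasurableSpace Ω} (ν : Ω → Measure (ℝ × ℝ)) (W : ℝ → ℝ → Ω → ℝ)
    (T' : ℝ) (P : Measure Ω) : ℝ≥0∞ :=
  ∫⁻ ω, (∫⁻ p in Ioc (0:ℝ) T' ×ˢ (univ : Set ℝ),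
    ENNReal.ofReal ((W p.1 p.2 ω) ^ 2) ∂(ν ω)) ∂P

/-! On `K` the jumps of `X^i` vanish almost surely: `K` is a countable union of graphs of
predictable times, at each of which the quasi-left-continuous `X^i` does not jump. Hence
`ΔX = ΔX^p` on `K`, while off `K` the integrand `φ` vanishes, so the two jump sums agree term
by term. -/

theorem Function.leftLim_add {α β : Type*} [LinearOrder α] [TopologicalSpace α]
    [OrderTopology α] [TopologicalSpace β] [Add β] [ContinuousAdd β] [T2Space β]
    {f g : α → β} {a : α} [(nhdsWithin a (Iio a)).NeBot]
    (hf : ∃ l, Tendsto f (nhdsWithin a (Iio a)) (nhds l))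
    (hg : ∃ l, Tendsto g (nhdsWithin a (Iio a)) (nhds l)) :
    Function.leftLim (f + g) a = Function.leftLim f a + Function.leftLim g a := by
  obtain ⟨lf, hlf⟩ := hf
  obtain ⟨lg, hlg⟩ := hg
  rw [leftLim_eq_of_tendsto hlf, leftLim_eq_of_tendsto hlg]
  exact leftLim_eq_of_tendsto (f := f + g) (hlf.add hlg)

theorem jumpOf_add {Y Z : ℝ → Ω → ℝ} {t : ℝ} {ω : Ω}
    (hY : ∃ l, Tendsto (fun s => Y s ω) (nhdsWithin t (Iio t)) (nhds l))
    (hZ : ∃ l, Tendsto (fun s => Z s ω) (nhdsWithin t (Iio t)) (nhds l)) :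
    jumpOf (Y + Z) t ω = jumpOf Y t ω + jumpOf Z t ω := by
  have hlim : Function.leftLim (fun s => Y s ω + Z s ω) t =
      Function.leftLim (fun s => Y s ω) t + Function.leftLim (fun s => Z s ω) t :=
    Function.leftLim_add hY hZ
  simp only [jumpOf, Pi.add_apply, hlim]
  ring

theorem ae_jumpOf_eq_zero_of_mem_iUnion_graphOf {m : MeasurableSpace Ω} {P : Measure Ω}
    {Y : ℝ → Ω → ℝ} {R : ℕ → Ω → ℝ}
    (h : ∀ n, ∀ᵐ ω ∂P, 0 < R n ω → jumpOf Y (R n ω) ω = 0) :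
    ∀ᵐ ω ∂P, ∀ s, (s, ω) ∈ ⋃ n, graphOf (R n) → jumpOf Y s ω = 0 := by
  filter_upwards [ae_all_iff.2 h] with ω hω s hs
  obtain ⟨n, hpos, hRn : R n ω = s⟩ := mem_iUnion.1 hs
  subst hRn
  exact hω n hpos

theorem tsum_jumps_congr {β M : Type*} [AddCommMonoid M] [TopologicalSpace M]
    [Zero β] {S : Set ℝ} {a b : ℝ → β} {ψ : ℝ → β → M} (hψ : ∀ s, ψ s 0 = 0)
    (h : ∀ s ∈ S, ψ s (a s) = ψ s (b s)) :
    ∑' s : {s : ℝ // s ∈ S ∧ a s ≠ 0}, ψ s (a s) =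
      ∑' s : {s : ℝ // s ∈ S ∧ b s ≠ 0}, ψ s (b s) := by
  have key : ∀ c : ℝ → β, ∑' s : {s : ℝ // s ∈ S ∧ c s ≠ 0}, ψ s (c s) =
      ∑' s, S.indicator (fun s => ψ s (c s)) s := by
    intro c
    rw [← tsum_subtype_eq_of_support_subset (s := {s | s ∈ S ∧ c s ≠ 0})]
    · exact tsum_congr fun s => (indicator_of_mem s.2.1 (fun s => ψ s (c s))).symm
    · intro s hs
      have hsS : s ∈ S := mem_of_indicator_ne_zero hs
      refine ⟨hsS, fun hc => hs ?_⟩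
      rw [indicator_of_mem hsS, hc, hψ]
  rw [key, key, indicator_congr h]

theorem jumps_of_quasi_left_continuous_part_do_not_contribute_on_K_general
    {m : MeasurableSpace Ω} (F : Filtration ℝ m) (P : Measure Ω)
    (K : Set (ℝ × Ω))
    (hKgraphs : ∃ R : ℕ → Ω → ℝ, (∀ n, IsPredictableTime F (R n)) ∧
      (∀ n k, n ≠ k → Disjoint (graphOf (R n)) (graphOf (R k))) ∧ K = ⋃ n, graphOf (R n))
    (Xi Xp X : ℝ → Ω → ℝ)
    (hXicadlag : ∀ ω, IsCadlag fun t => Xi t ω)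
    (hXpcadlag : ∀ ω, IsCadlag fun t => Xp t ω)
    (hqlc : ∀ S : Ω → ℝ, IsPredictableTime F S → ∀ᵐ ω ∂P, 0 < S ω → jumpOf Xi (S ω) ω = 0)
    (hX : ∀ t ω, X t ω = Xi t ω + Xp t ω)
    (φ : ℝ → ℝ → Ω → ℝ)
    (hφ0 : ∀ s ω, φ s 0 ω = 0)
    (hφK : ∀ s x ω, (s, ω) ∉ K → φ s x ω = 0) :
    ∀ᵐ ω ∂P, ∀ t : ℝ,
      (∑' s : {s : ℝ // s ∈ Ioc (0:ℝ) t ∧ jumpOf X s ω ≠ 0},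
        ENNReal.ofReal (φ (s : ℝ) (jumpOf X (s : ℝ) ω) ω)) =
      (∑' s : {s : ℝ // s ∈ Ioc (0:ℝ) t ∧ jumpOf Xp s ω ≠ 0},
        ENNReal.ofReal (φ (s : ℝ) (jumpOf Xp (s : ℝ) ω) ω)) := by
  obtain ⟨R, hRpred, -, rfl⟩ := hKgraphs
  have hXsum : X = Xi + Xp := funext fun t => funext fun ω => hX t ω
  filter_upwards [ae_jumpOf_eq_zero_of_mem_iUnion_graphOf fun n => hqlc _ (hRpred n)]
    with ω hXiK t
  refine tsum_jumps_congr (ψ := fun s x => ENNReal.ofReal (φ s x ω))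
    (fun s => by rw [hφ0, ENNReal.ofReal_zero]) fun s _ => ?_
  by_cases hK : (s, ω) ∈ ⋃ n, graphOf (R n)
  · rw [hXsum, jumpOf_add ((hXicadlag ω).2 s) ((hXpcadlag ω).2 s), hXiK s hK, zero_add]
  · rw [hφK s _ ω hK, hφK s _ ω hK]

/-- with `J = K` up to evanescence, `X = X^i + X^p` (`X^i` quasi-left-
continuous with jumps in `D`, `X^p` predictable with jumps in `J`), and `φ ≥ 0`
predictable with `φ(·,0) = 0`, `φ = φ 1_K` and `|φ| ⋆ μ^X ∈ 𝒜⁺`, one has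
`∫ φ dμ^X = ∑_{0<s≤·} φ(s, ΔX^p_s)`: the jumps of `X^i` do not contribute on `K`. -/
theorem jumps_of_quasi_left_continuous_part_do_not_contribute_on_K
    {m : MeasurableSpace Ω} (F : Filtration ℝ m) (P : Measure Ω) [IsProbabilityMeasure P]
    (D J K : Set (ℝ × Ω))
    (hJK : ∀ᵐ ω ∂P, ∀ t : ℝ, (t, ω) ∈ J ↔ (t, ω) ∈ K)
    (hKgraphs : ∃ R : ℕ → Ω → ℝ, (∀ n, IsPredictableTime F (R n)) ∧
      (∀ n k, n ≠ k → Disjoint (graphOf (R n)) (graphOf (R k))) ∧ K = ⋃ n, graphOf (R n))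
    (Xi Xp X : ℝ → Ω → ℝ)
    (hXicadlag : ∀ ω, IsCadlag fun t => Xi t ω)
    (hXpcadlag : ∀ ω, IsCadlag fun t => Xp t ω)
    (hqlc : ∀ S : Ω → ℝ, IsPredictableTime F S → ∀ᵐ ω ∂P, 0 < S ω → jumpOf Xi (S ω) ω = 0)
    (hXiD : ∀ ω t, jumpOf Xi t ω ≠ 0 → (t, ω) ∈ D)
    (hXpJ : ∀ ω t, jumpOf Xp t ω ≠ 0 → (t, ω) ∈ J)
    (hXppred : PredictableProcess F Xp)
    (hX : ∀ t ω, X t ω = Xi t ω + Xp t ω)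
    (φ : ℝ → ℝ → Ω → ℝ)
    (hφpred : PredictableField F φ)
    (hφpos : ∀ s x ω, 0 ≤ φ s x ω)
    (hφ0 : ∀ s ω, φ s 0 ω = 0)
    (hφK : ∀ s x ω, (s, ω) ∉ K → φ s x ω = 0)
    (hφint : ∫⁻ ω, (∑' s : {s : ℝ // 0 < s ∧ jumpOf X s ω ≠ 0},
        ENNReal.ofReal (φ (s : ℝ) (jumpOf X (s : ℝ) ω) ω)) ∂P ≠ ⊤) :
    ∀ᵐ ω ∂P, ∀ t : ℝ,
      (∑' s : {s : ℝ // s ∈ Ioc (0:ℝ) t ∧ jumpOf X s ω ≠ 0},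
        ENNReal.ofReal (φ (s : ℝ) (jumpOf X (s : ℝ) ω) ω)) =
      (∑' s : {s : ℝ // s ∈ Ioc (0:ℝ) t ∧ jumpOf Xp s ω ≠ 0},
        ENNReal.ofReal (φ (s : ℝ) (jumpOf Xp (s : ℝ) ω) ω)) :=
  jumps_of_quasi_left_continuous_part_do_not_contribute_on_K_general F P K hKgraphs Xi Xp X
    hXicadlag hXpcadlag hqlc hX φ hφ0 hφK
end
end

section
/- Let μ be an integer-valued random measure with D = {μ({t}×ℝ)>0}, J the predictable support of D, and K the largest predictable subset of D. Then the following are equivalent up to evanescence: (a) J = K; (b) D is the disjoint union of K and ∪_n [[T^i_n]] with (T^i_n) disjoint totally inaccessible times. -/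
open MeasureTheory Filter Set Function
open scoped ENNReal

noncomputable section

variable {Ω : Type*}

/-! Since `K ⊆ D`, additivity gives `ᵖ(1_{D \ K}) = 1_J - 1_K`, so `J = K` exactly
when `D \ K` has evanescent predictable projection, i.e. when no predictable time charges
`D \ K`. A subset of the thin set `D` splits into disjoint graphs, and graphs that no
predictable time charges are graphs of totally inaccessible times. -/

theorem indicator_one_sub_indicator_one_eq_zero_iff {α : Type*} {s t : Set α} {x : α} :
    s.indicator (1 : α → ℝ) x - t.indicator 1 x = 0 ↔ (x ∈ s ↔ x ∈ t) := by
  by_cases hs : x ∈ s <;> by_cases ht : x ∈ t <;> simp [hs, ht]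

theorem exists_graphOf_eq_of_subset_graphOf {A : Set (ℝ × Ω)} {R : Ω → ℝ}
    (hA : A ⊆ graphOf R) : ∃ T : Ω → ℝ, graphOf T = A := by
  classical
  -- off `A` the time is sent to `0`, whose graph is empty because `graphOf` only sees `0 < t`
  refine ⟨fun ω => if (R ω, ω) ∈ A then R ω else 0, ?_⟩
  ext ⟨t, ω⟩
  by_cases hω : (R ω, ω) ∈ A
  · simp only [graphOf, mem_ofPred_eq, if_pos hω]
    refine ⟨fun ⟨_, hR⟩ => hR ▸ hω, fun h => hA h⟩
  · simp only [graphOf, mem_ofPred_eq, if_neg hω]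
    refine ⟨fun ⟨ht, h0⟩ => absurd h0 ht.ne, fun h => ?_⟩
    exact absurd ((hA h).2 ▸ h) hω

theorem exists_pairwise_disjoint_graphOf_of_subset_iUnion {B : Set (ℝ × Ω)} {R : ℕ → Ω → ℝ}
    (hB : B ⊆ ⋃ n, graphOf (R n)) :
    ∃ T : ℕ → Ω → ℝ, (∀ n k, n ≠ k → Disjoint (graphOf (T n)) (graphOf (T k))) ∧
      ⋃ n, graphOf (T n) = B := by
  have hpiece : ∀ n, ∃ T : Ω → ℝ,
      graphOf T = disjointed (fun n => graphOf (R n) ∩ B) n := fun n =>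
    exists_graphOf_eq_of_subset_graphOf ((disjointed_subset _ n).trans inter_subset_left)
  choose T hT using hpiece
  refine ⟨T, fun n k hnk => ?_, ?_⟩
  · rw [hT, hT]
    exact disjoint_disjointed _ hnk
  · simp only [hT, iUnion_disjointed, ← iUnion_inter, inter_eq_right.2 hB]

section
variable {m : MeasurableSpace Ω} {F : Filtration ℝ m} {P : Measure Ω}

theorem totallyInaccessible_of_graphOf_subset {B : Set (ℝ × Ω)} {T : Ω → ℝ}
    (hT : graphOf T ⊆ B)
    (hB : ∀ S : Ω → ℝ, IsPredictableTime F S → ∀ᵐ ω ∂P, (S ω, ω) ∉ B) :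
    TotallyInaccessible F P T := fun S hS =>
  (hB S hS).mono fun _ hω ⟨hpos, hTS⟩ => hω (hT ⟨hTS ▸ hpos, hTS.symm ▸ rfl⟩)

theorem ae_notMem_iUnion_graphOf {T : ℕ → Ω → ℝ} (hT : ∀ n, TotallyInaccessible F P (T n))
    {S : Ω → ℝ} (hS : IsPredictableTime F S) :
    ∀ᵐ ω ∂P, (S ω, ω) ∉ ⋃ n, graphOf (T n) := by
  filter_upwards [ae_all_iff.2 fun n => hT n S hS] with ω hω hmem
  obtain ⟨n, hpos, hTS⟩ := mem_iUnion.1 hmem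
  exact hω n ⟨hTS ▸ hpos, hTS⟩

end

theorem J_eq_K_iff_D_decomposes_general
    {m : MeasurableSpace Ω} (F : Filtration ℝ m) (P : Measure Ω)
    (D J K : Set (ℝ × Ω))
    (pproj : (ℝ × Ω → ℝ) → (ℝ × Ω → ℝ))
    (hthin : ∃ R : ℕ → Ω → ℝ, D = ⋃ n, graphOf (R n))
    (hKD : K ⊆ D)
    (hadd : ∀ f g : ℝ × Ω → ℝ, ∀ᵐ ω ∂P, ∀ t : ℝ,
      pproj (f + g) (t, ω) = pproj f (t, ω) + pproj g (t, ω))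
    (hD : ∀ᵐ ω ∂P, ∀ t : ℝ,
      pproj (Set.indicator D (1 : ℝ × Ω → ℝ)) (t, ω) = Set.indicator J (1 : ℝ × Ω → ℝ) (t, ω))
    (hK : ∀ᵐ ω ∂P, ∀ t : ℝ,
      pproj (Set.indicator K (1 : ℝ × Ω → ℝ)) (t, ω) = Set.indicator K (1 : ℝ × Ω → ℝ) (t, ω))
    (hchar : ∀ B : Set (ℝ × Ω), B ⊆ D →
      ((∀ᵐ ω ∂P, ∀ t : ℝ, pproj (Set.indicator B (1 : ℝ × Ω → ℝ)) (t, ω) = 0) ↔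
        ∀ S : Ω → ℝ, IsPredictableTime F S → ∀ᵐ ω ∂P, (S ω, ω) ∉ B)) :
    (∀ᵐ ω ∂P, ∀ t : ℝ, (t, ω) ∈ J ↔ (t, ω) ∈ K) ↔
    (∃ T : ℕ → Ω → ℝ,
      (∀ n, TotallyInaccessible F P (T n)) ∧
      (∀ n k, n ≠ k → Disjoint (graphOf (T n)) (graphOf (T k))) ∧
      (∀ n, ∀ᵐ ω ∂P, ∀ t : ℝ, (t, ω) ∈ graphOf (T n) → (t, ω) ∉ K) ∧
      (∀ᵐ ω ∂P, ∀ t : ℝ, (t, ω) ∈ D ↔ ((t, ω) ∈ K ∨ ∃ n, (t, ω) ∈ graphOf (T n)))) := by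
  obtain ⟨R, hR⟩ := hthin
  have hproj : ∀ᵐ ω ∂P, ∀ t : ℝ, pproj ((D \ K).indicator 1) (t, ω) =
      J.indicator (1 : ℝ × Ω → ℝ) (t, ω) - K.indicator 1 (t, ω) := by
    have hsplit : (D \ K).indicator (1 : ℝ × Ω → ℝ) + K.indicator 1 = D.indicator 1 := by
      rw [Set.indicator_sdiff hKD, sub_add_cancel]
    filter_upwards [hadd ((D \ K).indicator 1) (K.indicator 1), hD, hK] with ω hω hDω hKω t
    rw [← hDω, ← hKω, ← hsplit, hω, add_sub_cancel_right]
  have hJK : (∀ᵐ ω ∂P, ∀ t : ℝ, (t, ω) ∈ J ↔ (t, ω) ∈ K) ↔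
      ∀ᵐ ω ∂P, ∀ t : ℝ, pproj ((D \ K).indicator 1) (t, ω) = 0 := by
    refine eventually_congr (hproj.mono fun ω hω => forall_congr' fun t => ?_)
    rw [hω, indicator_one_sub_indicator_one_eq_zero_iff]
  rw [hJK, hchar (D \ K) sdiff_subset]
  constructor
  · intro hDK
    obtain ⟨T, hdisj, hT⟩ := exists_pairwise_disjoint_graphOf_of_subset_iUnion
      (hR ▸ sdiff_subset : D \ K ⊆ ⋃ n, graphOf (R n))
    have hTDK : ∀ n, graphOf (T n) ⊆ D \ K := fun n =>
      hT ▸ subset_iUnion (fun n => graphOf (T n)) n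
    refine ⟨T, fun n => totallyInaccessible_of_graphOf_subset (hTDK n) hDK, hdisj,
      fun n => ae_of_all _ fun _ _ ht => (hTDK n ht).2, ae_of_all _ fun ω t => ?_⟩
    have hmem : (t, ω) ∈ D \ K ↔ ∃ n, (t, ω) ∈ graphOf (T n) := by rw [← hT, mem_iUnion]
    by_cases htK : (t, ω) ∈ K
    · simp [htK, hKD htK]
    · simpa [htK] using hmem
  · rintro ⟨T, hTin, -, -, hdec⟩ S hS
    filter_upwards [hdec, ae_notMem_iUnion_graphOf hTin hS] with ω hdecω hSω ⟨hSD, hSK⟩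
    exact hSω (mem_iUnion.2 (((hdecω (S ω)).1 hSD).resolve_left hSK))

/-- `J = K` (up to evanescence) iff `D` is the disjoint union of `K` and
countably many graphs of totally inaccessible times. The predictable projection
`pproj` is given abstractly with its relevant properties: additivity, `ᵖ(1_D) = 1_J`,
`ᵖ(1_K) = 1_K`, and the characterization of subsets of `D` with evanescent predictable
projection via predictable times. -/
theorem J_eq_K_iff_D_decomposes
    {m : MeasurableSpace Ω} (F : Filtration ℝ m) (P : Measure Ω) [IsProbabilityMeasure P]
    (D J K : Set (ℝ × Ω))
    (pproj : (ℝ × Ω → ℝ) → (ℝ × Ω → ℝ))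
    (hthin : ∃ R : ℕ → Ω → ℝ, D = ⋃ n, graphOf (R n))
    (hKD : K ⊆ D)
    (hKpred : PredictableSet F K) (hJpred : PredictableSet F J)
    (hadd : ∀ f g : ℝ × Ω → ℝ, ∀ᵐ ω ∂P, ∀ t : ℝ,
      pproj (f + g) (t, ω) = pproj f (t, ω) + pproj g (t, ω))
    (hD : ∀ᵐ ω ∂P, ∀ t : ℝ,
      pproj (Set.indicator D (1 : ℝ × Ω → ℝ)) (t, ω) = Set.indicator J (1 : ℝ × Ω → ℝ) (t, ω))
    (hK : ∀ᵐ ω ∂P, ∀ t : ℝ,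
      pproj (Set.indicator K (1 : ℝ × Ω → ℝ)) (t, ω) = Set.indicator K (1 : ℝ × Ω → ℝ) (t, ω))
    (hchar : ∀ B : Set (ℝ × Ω), B ⊆ D →
      ((∀ᵐ ω ∂P, ∀ t : ℝ, pproj (Set.indicator B (1 : ℝ × Ω → ℝ)) (t, ω) = 0) ↔
        ∀ S : Ω → ℝ, IsPredictableTime F S → ∀ᵐ ω ∂P, (S ω, ω) ∉ B)) :
    (∀ᵐ ω ∂P, ∀ t : ℝ, (t, ω) ∈ J ↔ (t, ω) ∈ K) ↔
    (∃ T : ℕ → Ω → ℝ,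
      (∀ n, TotallyInaccessible F P (T n)) ∧
      (∀ n k, n ≠ k → Disjoint (graphOf (T n)) (graphOf (T k))) ∧
      (∀ n, ∀ᵐ ω ∂P, ∀ t : ℝ, (t, ω) ∈ graphOf (T n) → (t, ω) ∉ K) ∧
      (∀ᵐ ω ∂P, ∀ t : ℝ, (t, ω) ∈ D ↔ ((t, ω) ∈ K ∨ ∃ n, (t, ω) ∈ graphOf (T n)))) :=
  J_eq_K_iff_D_decomposes_general F P D J K pproj hthin hKD hadd hD hK hchar
end
end
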